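/- For the polynomial P_6(z) = z + ((9+8√2)/(4√2+8))z² + ((6√2+10)/(4√2+8))z³ + ((4√2+6)/(4√2+8))z⁴ + ((2√2+2)/(4√2+8))z⁵ + (1/(4√2+8))z⁶ and every real t, one has 4·|P_6(e^{it})|² = 2 + (8√2−4)·cos t + (38−12√2)·cos²t + (28√2−4)·cos³t + (28√2−10)·cos⁴t + (32−16√2)·cos⁵t. -/

import Mathlib

/-!
Since `1 / (4√2 + 8) = (2 - √2) / 8`, we have `8 P₆(z) = z R(z)` for a quintic `R` with
coefficients in `ℤ[√2]`. On the unit circle `z ^ k = T_k(cos t) + i sin t U_{k-1}(cos t)`, so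
`|R(e^{it})|² = A(cos t)² + (1 - cos² t) B(cos t)²` with explicit polynomials `A`, `B`, and the
claim becomes a polynomial identity in `cos t` over `ℚ(√2)`.
-/

/-- The polynomial `P₆(z) = z + ((9+8√2)/(4√2+8))z² + ((6√2+10)/(4√2+8))z³ + ((4√2+6)/(4√2+8))z⁴
+ ((2√2+2)/(4√2+8))z⁵ + (1/(4√2+8))z⁶`. -/
noncomputable def P6 (z : ℂ) : ℂ :=
  z + (((9 + 8 * Real.sqrt 2) / (4 * Real.sqrt 2 + 8) : ℝ) : ℂ) * z ^ 2 +
    (((6 * Real.sqrt 2 + 10) / (4 * Real.sqrt 2 + 8) : ℝ) : ℂ) * z ^ 3 +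
    (((4 * Real.sqrt 2 + 6) / (4 * Real.sqrt 2 + 8) : ℝ) : ℂ) * z ^ 4 +
    (((2 * Real.sqrt 2 + 2) / (4 * Real.sqrt 2 + 8) : ℝ) : ℂ) * z ^ 5 +
    ((1 / (4 * Real.sqrt 2 + 8) : ℝ) : ℂ) * z ^ 6

open Complex Polynomial Polynomial.Chebyshev

theorem re_exp_I_mul_pow (t : ℝ) (k : ℕ) :
    (exp (I * t) ^ k).re = (T ℝ k).eval (Real.cos t) := by
  rw [← exp_nat_mul, T_real_cos, show (k : ℂ) * (I * t) = ((k * t : ℝ) : ℂ) * I by push_cast; ring,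
    exp_ofReal_mul_I_re]
  push_cast
  rfl

theorem im_exp_I_mul_pow (t : ℝ) (k : ℕ) :
    (exp (I * t) ^ k).im = Real.sin t * (U ℝ (k - 1)).eval (Real.cos t) := by
  have h := U_real_cos t ((k : ℤ) - 1)
  push_cast at h
  rw [sub_add_cancel] at h
  rw [← exp_nat_mul, show (k : ℂ) * (I * t) = ((k * t : ℝ) : ℂ) * I by push_cast; ring,
    exp_ofReal_mul_I_im, ← h, mul_comm]

theorem sq_norm_sum_mul_exp_I_mul_pow {n : ℕ} (b : Fin n → ℝ) (t : ℝ) :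
    ‖∑ k, (b k : ℂ) * exp (I * t) ^ (k : ℕ)‖ ^ 2 =
      (∑ k, b k * (T ℝ k).eval (Real.cos t)) ^ 2 +
        Real.sin t ^ 2 * (∑ k, b k * (U ℝ (k - 1)).eval (Real.cos t)) ^ 2 := by
  simp only [Complex.sq_norm, normSq_apply, re_sum, im_sum, re_ofReal_mul, im_ofReal_mul,
    re_exp_I_mul_pow, im_exp_I_mul_pow, mul_left_comm _ (Real.sin t), ← Finset.mul_sum]
  ring

noncomputable def P6Coeff : Fin 6 → ℝ :=
  ![8, 2 + 7 * √2, 8 + 2 * √2, 4 + 2 * √2, 2 * √2, 2 - √2]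

theorem P6_eq (z : ℂ) : P6 z = z / 8 * ∑ k, (P6Coeff k : ℂ) * z ^ (k : ℕ) := by
  have hr : √2 ^ 2 = 2 := Real.sq_sqrt (by norm_num)
  have hd : 4 * √2 + 8 ≠ 0 := by positivity
  have h2 : (9 + 8 * √2) / (4 * √2 + 8) = (2 + 7 * √2) / 8 := by
    rw [div_eq_div_iff hd (by norm_num)]; linear_combination (-28) * hr
  have h3 : (6 * √2 + 10) / (4 * √2 + 8) = (8 + 2 * √2) / 8 := by
    rw [div_eq_div_iff hd (by norm_num)]; linear_combination (-8) * hr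
  have h4 : (4 * √2 + 6) / (4 * √2 + 8) = (4 + 2 * √2) / 8 := by
    rw [div_eq_div_iff hd (by norm_num)]; linear_combination (-8) * hr
  have h5 : (2 * √2 + 2) / (4 * √2 + 8) = 2 * √2 / 8 := by
    rw [div_eq_div_iff hd (by norm_num)]; linear_combination (-8) * hr
  have h6 : 1 / (4 * √2 + 8) = (2 - √2) / 8 := by
    rw [div_eq_div_iff hd (by norm_num)]; linear_combination 4 * hr
  rw [P6, h2, h3, h4, h5, h6]
  simp only [P6Coeff, Fin.sum_univ_six, Fin.isValue, Matrix.cons_val, Fin.coe_ofNat_eq_mod,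
    Nat.reduceMod, Matrix.cons_val_zero, Matrix.cons_val_one, Nat.zero_mod, Nat.one_mod]
  push_cast
  ring

theorem sum_P6Coeff_mul_T_eval (x : ℝ) :
    ∑ k, P6Coeff k * (T ℝ k).eval x =
      -4 * √2 * x + (16 - 12 * √2) * x ^ 2 + (28 * √2 - 24) * x ^ 3 + 16 * √2 * x ^ 4 +
        (32 - 16 * √2) * x ^ 5 := by
  simp only [P6Coeff, Fin.sum_univ_six, Fin.isValue, Matrix.cons_val_zero, Fin.coe_ofNat_eq_mod,
    Nat.zero_mod, CharP.cast_eq_zero, T_zero, eval_one, mul_one, Matrix.cons_val_one, Nat.one_mod,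
    Nat.cast_one, T_one, eval_X, Matrix.cons_val, Nat.reduceMod, Nat.cast_ofNat, T_two, eval_sub,
    eval_mul, eval_ofNat, eval_pow, T_eq ℝ 3, Int.reduceSub, T_eq ℝ 4, Nat.mod_succ, T_eq ℝ 5]
  ring

theorem sum_P6Coeff_mul_U_eval (x : ℝ) :
    ∑ k, P6Coeff k * (U ℝ (k - 1)).eval x =
      4 * √2 + (16 - 4 * √2) * x + (20 * √2 - 8) * x ^ 2 + 16 * √2 * x ^ 3 +
        (32 - 16 * √2) * x ^ 4 := by
  simp only [P6Coeff, Fin.sum_univ_six, Fin.isValue, Matrix.cons_val_zero, Fin.coe_ofNat_eq_mod,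
    Nat.zero_mod, CharP.cast_eq_zero, zero_sub, Int.reduceNeg, U_neg_one, eval_zero, mul_zero,
    Matrix.cons_val_one, Nat.one_mod, Nat.cast_one, sub_self, U_zero, eval_one, mul_one, zero_add,
    Matrix.cons_val, Nat.reduceMod, Nat.cast_ofNat, Int.reduceSub, U_one, eval_mul, eval_ofNat,
    eval_X, U_two, eval_sub, eval_pow, U_eq ℝ 3, Nat.mod_succ, U_eq ℝ 4]
  ring

theorem stmt15 (t : ℝ) :
    4 * ‖P6 (Complex.exp (Complex.I * t))‖ ^ 2 =
      2 + (8 * Real.sqrt 2 - 4) * Real.cos t + (38 - 12 * Real.sqrt 2) * Real.cos t ^ 2 +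
        (28 * Real.sqrt 2 - 4) * Real.cos t ^ 3 + (28 * Real.sqrt 2 - 10) * Real.cos t ^ 4 +
        (32 - 16 * Real.sqrt 2) * Real.cos t ^ 5 := by
  have hr : √2 ^ 2 = 2 := Real.sq_sqrt (by norm_num)
  have hnorm : ‖P6 (exp (I * t))‖ = ‖∑ k, (P6Coeff k : ℂ) * exp (I * t) ^ (k : ℕ)‖ / 8 := by
    rw [P6_eq, norm_mul, norm_div, norm_exp_I_mul_ofReal]
    norm_num
    ring
  rw [hnorm, div_pow, sq_norm_sum_mul_exp_I_mul_pow, sum_P6Coeff_mul_T_eval,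
    sum_P6Coeff_mul_U_eval, Real.sin_sq]
  set c := Real.cos t
  -- `(A₁² + (1 - c²) B₁²) / 16`, where `A₁`, `B₁` are the `√2`-parts of the two sums
  linear_combination (1 / 16 : ℝ) * ((-4 * c - 12 * c ^ 2 + 28 * c ^ 3 + 16 * c ^ 4 - 16 * c ^ 5) ^ 2
    + (1 - c ^ 2) * (4 - 4 * c + 20 * c ^ 2 + 16 * c ^ 3 - 16 * c ^ 4) ^ 2) * hr
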